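/- arXiv:1907.00296 — 4 statements merged into one kernel-verified Lean document; each statement's English description precedes it below -/
import Mathlib

section
/- Let D ≥ 1 and let y, y_1, …, y_k be points in ℝ^D. Define the linear map H = Σ_{j=1}^k (y_j − y)(y_j − y)^T on ℝ^D and the vector f = Σ_{j=1}^k (‖y_j‖² − ‖y‖²)(y_j − y). If H is invertible, then c* = (1/2) H⁻¹ f is the unique global minimizer over c ∈ ℝ^D of the function F(c) = Σ_{j=1}^k (‖y_j − c‖² − ‖y − c‖²)²; that is, F(c*) ≤ F(c) for all c, with equality only when c = c*. -/
open RealInnerProductSpace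

/-- Theorem 1 of the paper: closed-form solution of the centered `k`-osculating sphere
optimization. If `H = ∑ j (y_j − y)(y_j − y)ᵀ` is invertible, then `c* = (1/2) H⁻¹ f`
(equivalently `H c* = (1/2) f`) is the unique global minimizer of
`F(c) = ∑ j (‖y_j − c‖² − ‖y − c‖²)²`. -/
theorem stmt_0 {D k : ℕ} (hD : 1 ≤ D)
    (y : EuclideanSpace ℝ (Fin D)) (ys : Fin k → EuclideanSpace ℝ (Fin D))
    (H : EuclideanSpace ℝ (Fin D) →ₗ[ℝ] EuclideanSpace ℝ (Fin D))
    (hH : ∀ v, H v = ∑ j, ⟪ys j - y, v⟫ • (ys j - y))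
    (f : EuclideanSpace ℝ (Fin D))
    (hf : f = ∑ j, (‖ys j‖ ^ 2 - ‖y‖ ^ 2) • (ys j - y))
    (hinv : Function.Bijective H)
    (cstar : EuclideanSpace ℝ (Fin D))
    (hcstar : H cstar = (1 / 2 : ℝ) • f) :
    ∀ c : EuclideanSpace ℝ (Fin D),
      (∑ j, (‖ys j - cstar‖ ^ 2 - ‖y - cstar‖ ^ 2) ^ 2)
        ≤ (∑ j, (‖ys j - c‖ ^ 2 - ‖y - c‖ ^ 2) ^ 2) ∧
      ((∑ j, (‖ys j - c‖ ^ 2 - ‖y - c‖ ^ 2) ^ 2)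
          = (∑ j, (‖ys j - cstar‖ ^ 2 - ‖y - cstar‖ ^ 2) ^ 2) → c = cstar) := by
  intro c
  set d : EuclideanSpace ℝ (Fin D) := c - cstar with hd
  -- general expansion: for any b, ‖ys j - b‖² - ‖y - b‖² = aⱼ - 2⟪vⱼ, b⟫
  have expand : ∀ (j : Fin k) (b : EuclideanSpace ℝ (Fin D)),
      ‖ys j - b‖ ^ 2 - ‖y - b‖ ^ 2
        = (‖ys j‖ ^ 2 - ‖y‖ ^ 2) - 2 * ⟪ys j - y, b⟫ := by
    intro j b
    have e1 := norm_sub_sq_real (ys j) b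
    have e2 := norm_sub_sq_real y b
    rw [e1, e2, inner_sub_left]
    ring
  have key : ∀ j : Fin k, ‖ys j - c‖ ^ 2 - ‖y - c‖ ^ 2
      = (‖ys j - cstar‖ ^ 2 - ‖y - cstar‖ ^ 2) - 2 * ⟪ys j - y, d⟫ := by
    intro j
    rw [expand j c, expand j cstar, hd, inner_sub_right]
    ring
  have hcross : ∑ j, (‖ys j - cstar‖ ^ 2 - ‖y - cstar‖ ^ 2) * ⟪ys j - y, d⟫ = 0 := by
    have h1 : ⟪H cstar, d⟫ = ∑ j, ⟪ys j - y, cstar⟫ * ⟪ys j - y, d⟫ := by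
      rw [hH, sum_inner]
      exact Finset.sum_congr rfl fun j _ => real_inner_smul_left _ _ _
    have h2 : ⟪f, d⟫ = ∑ j, (‖ys j‖ ^ 2 - ‖y‖ ^ 2) * ⟪ys j - y, d⟫ := by
      rw [hf, sum_inner]
      exact Finset.sum_congr rfl fun j _ => real_inner_smul_left _ _ _
    have h3 : ⟪H cstar, d⟫ = (1 / 2 : ℝ) * ⟪f, d⟫ := by
      rw [hcstar, real_inner_smul_left]
    calc ∑ j, (‖ys j - cstar‖ ^ 2 - ‖y - cstar‖ ^ 2) * ⟪ys j - y, d⟫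
        = ∑ j, ((‖ys j‖ ^ 2 - ‖y‖ ^ 2) * ⟪ys j - y, d⟫
            - 2 * (⟪ys j - y, cstar⟫ * ⟪ys j - y, d⟫)) := by
          refine Finset.sum_congr rfl fun j _ => ?_
          rw [expand j cstar]; ring
      _ = ⟪f, d⟫ - 2 * ⟪H cstar, d⟫ := by
          rw [Finset.sum_sub_distrib, ← Finset.mul_sum, h1, h2]
      _ = 0 := by rw [h3]; ring
  have hsum : (∑ j, (‖ys j - c‖ ^ 2 - ‖y - c‖ ^ 2) ^ 2)
      = (∑ j, (‖ys j - cstar‖ ^ 2 - ‖y - cstar‖ ^ 2) ^ 2)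
        + 4 * ∑ j, ⟪ys j - y, d⟫ ^ 2 := by
    have : ∀ j : Fin k, (‖ys j - c‖ ^ 2 - ‖y - c‖ ^ 2) ^ 2
        = (‖ys j - cstar‖ ^ 2 - ‖y - cstar‖ ^ 2) ^ 2
          - 4 * ((‖ys j - cstar‖ ^ 2 - ‖y - cstar‖ ^ 2) * ⟪ys j - y, d⟫)
          + 4 * ⟪ys j - y, d⟫ ^ 2 := by
      intro j; rw [key j]; ring
    rw [Finset.sum_congr rfl fun j _ => this j, Finset.sum_add_distrib,
      Finset.sum_sub_distrib, ← Finset.mul_sum, ← Finset.mul_sum, hcross]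
    ring
  have hnn : (0:ℝ) ≤ ∑ j, ⟪ys j - y, d⟫ ^ 2 :=
    Finset.sum_nonneg fun j _ => sq_nonneg _
  constructor
  · rw [hsum]; linarith
  · intro heq
    rw [hsum] at heq
    have hzero : ∑ j, ⟪ys j - y, d⟫ ^ 2 = 0 := by linarith
    have hall : ∀ j ∈ Finset.univ, ⟪ys j - y, d⟫ ^ 2 = 0 :=
      (Finset.sum_eq_zero_iff_of_nonneg fun j _ => sq_nonneg _).mp hzero
    have hHd : H d = 0 := by
      rw [hH]
      refine Finset.sum_eq_zero fun j _ => ?_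
      have := hall j (Finset.mem_univ j)
      rw [pow_eq_zero_iff (by norm_num)] at this
      rw [this, zero_smul]
    have : d = 0 := by
      apply hinv.injective
      rw [hHd, map_zero]
    have : c = cstar := by
      have := this
      rw [hd, sub_eq_zero] at this
      exact this
    exact this
end

section
/- Let γ : ℝ → ℝ^D be a C² curve parametrized by arc length, i.e. ‖γ'(t)‖ = 1 for all t, and suppose there is r₀ > 0 with ‖γ''(t)‖ ≤ 1/r₀ for all t. Then for every s ≥ 0, s − s³/(24 r₀²) ≤ ‖γ(s) − γ(0)‖ ≤ s. -/
/-!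
Project the chord onto the unit tangent `u = γ'(s/2)` at the midpoint. For unit vectors,
`⟪u, γ'(t)⟫ = 1 - ‖γ'(t) - u‖² / 2`, and the curvature bound `κ = 1/r₀` makes `γ'` `κ`-Lipschitz,
so `⟪u, γ'(t)⟫ ≥ 1 - κ² (t - s/2)² / 2`. Integrating this over `[0, s]` gives
`‖γ s - γ 0‖ ≥ ⟪u, γ s - γ 0⟫ ≥ s - κ² s³ / 24`. The upper bound is the mean value inequality.
-/

open scoped RealInnerProductSpace

section UnitSpeedCurve

variable {E : Type*} [NormedAddCommGroup E] [InnerProductSpace ℝ E]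

theorem inner_eq_one_sub_norm_sub_sq_div_two {u v : E} (hu : ‖u‖ = 1) (hv : ‖v‖ = 1) :
    ⟪u, v⟫ = 1 - ‖v - u‖ ^ 2 / 2 := by
  rw [norm_sub_sq_real, hu, hv, real_inner_comm]
  ring

variable {γ : ℝ → E} {κ : ℝ}

theorem one_sub_le_inner_deriv (hγ' : Differentiable ℝ (deriv γ))
    (hunit : ∀ t, ‖deriv γ t‖ = 1) (hcurv : ∀ t, ‖deriv (deriv γ) t‖ ≤ κ) (a t : ℝ) :
    1 - κ ^ 2 * (t - a) ^ 2 / 2 ≤ ⟪deriv γ a, deriv γ t⟫ := by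
  have hlip : ‖deriv γ t - deriv γ a‖ ≤ κ * |t - a| :=
    convex_univ.norm_image_sub_le_of_norm_deriv_le (fun x _ => hγ' x) (fun x _ => hcurv x)
      trivial trivial
  have hsq : ‖deriv γ t - deriv γ a‖ ^ 2 ≤ κ ^ 2 * (t - a) ^ 2 :=
    calc ‖deriv γ t - deriv γ a‖ ^ 2 ≤ (κ * |t - a|) ^ 2 :=
          pow_le_pow_left₀ (norm_nonneg _) hlip 2
      _ = κ ^ 2 * (t - a) ^ 2 := by rw [mul_pow, sq_abs]
  rw [inner_eq_one_sub_norm_sub_sq_div_two (hunit a) (hunit t)]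
  linarith

theorem sub_le_inner_deriv_image_sub (hγ : Differentiable ℝ γ)
    (hγ' : Differentiable ℝ (deriv γ)) (hunit : ∀ t, ‖deriv γ t‖ = 1)
    (hcurv : ∀ t, ‖deriv (deriv γ) t‖ ≤ κ) (a : ℝ) {s : ℝ} (hs : 0 ≤ s) :
    s - κ ^ 2 * ((s - a) ^ 3 + a ^ 3) / 6 ≤ ⟪deriv γ a, γ s - γ 0⟫ := by
  set u := deriv γ a
  -- `⟪u, γ t⟫` minus an antiderivative of its lower bound from `one_sub_le_inner_deriv`
  set g : ℝ → ℝ := fun t => ⟪u, γ t⟫ - (t - κ ^ 2 * (t - a) ^ 3 / 6)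
  have hg : ∀ t, HasDerivAt g (⟪u, deriv γ t⟫ - (1 - κ ^ 2 * (t - a) ^ 2 / 2)) t := by
    intro t
    have hinner : HasDerivAt (fun t => ⟪u, γ t⟫) ⟪u, deriv γ t⟫ t := by
      simpa using (hasDerivAt_const t u).inner ℝ (hγ t).hasDerivAt
    have hpoly : HasDerivAt (fun t : ℝ => t - κ ^ 2 * (t - a) ^ 3 / 6)
        (1 - κ ^ 2 * (t - a) ^ 2 / 2) t :=
      ((hasDerivAt_id' t).fun_sub ((((hasDerivAt_id' t).sub_const a).fun_pow 3).const_mul (κ ^ 2)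
        |>.div_const 6)).congr_deriv (by ring)
    exact hinner.sub hpoly
  have hmono : Monotone g := monotone_of_deriv_nonneg (fun t => (hg t).differentiableAt)
    fun t => (hg t).deriv ▸ sub_nonneg.2 (one_sub_le_inner_deriv hγ' hunit hcurv a t)
  have hg0s := hmono hs
  simp only [g, inner_sub_right] at hg0s ⊢
  linarith

theorem sub_le_norm_image_sub (hγ : Differentiable ℝ γ) (hγ' : Differentiable ℝ (deriv γ))
    (hunit : ∀ t, ‖deriv γ t‖ = 1) (hcurv : ∀ t, ‖deriv (deriv γ) t‖ ≤ κ) {s : ℝ}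
    (hs : 0 ≤ s) : s - κ ^ 2 * s ^ 3 / 24 ≤ ‖γ s - γ 0‖ :=
  calc s - κ ^ 2 * s ^ 3 / 24 = s - κ ^ 2 * ((s - s / 2) ^ 3 + (s / 2) ^ 3) / 6 := by ring
    _ ≤ ⟪deriv γ (s / 2), γ s - γ 0⟫ :=
      sub_le_inner_deriv_image_sub hγ hγ' hunit hcurv (s / 2) hs
    _ ≤ ‖deriv γ (s / 2)‖ * ‖γ s - γ 0‖ := real_inner_le_norm _ _
    _ = ‖γ s - γ 0‖ := by rw [hunit, one_mul]

end UnitSpeedCurve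

theorem stmt_1_general {D : ℕ} (γ : ℝ → EuclideanSpace ℝ (Fin D))
    (hγ : ContDiff ℝ 2 γ)
    (hunit : ∀ t : ℝ, ‖deriv γ t‖ = 1)
    (r₀ : ℝ)
    (hcurv : ∀ t : ℝ, ‖deriv (deriv γ) t‖ ≤ 1 / r₀) :
    ∀ s : ℝ, 0 ≤ s →
      s - s ^ 3 / (24 * r₀ ^ 2) ≤ ‖γ s - γ 0‖ ∧ ‖γ s - γ 0‖ ≤ s := by
  intro s hs
  have hdiff : Differentiable ℝ γ := hγ.differentiable (by norm_num)
  constructor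
  · convert sub_le_norm_image_sub hdiff hγ.differentiable_deriv_two hunit hcurv hs using 2
    ring
  · simpa [abs_of_nonneg hs] using convex_univ.norm_image_sub_le_of_norm_deriv_le
      (fun x _ => hdiff x) (fun x _ => (hunit x).le) trivial trivial (x := 0) (y := s)

/-- Proposition 1 of the paper: for a unit-speed `C²` curve `γ` in `ℝ^D` with
`‖γ''‖ ≤ 1/r₀`, the chord length satisfies `s − s³/(24 r₀²) ≤ ‖γ(s) − γ(0)‖ ≤ s`
for all `s ≥ 0`. -/
theorem stmt_1 {D : ℕ} (γ : ℝ → EuclideanSpace ℝ (Fin D))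
    (hγ : ContDiff ℝ 2 γ)
    (hunit : ∀ t : ℝ, ‖deriv γ t‖ = 1)
    (r₀ : ℝ) (hr₀ : 0 < r₀)
    (hcurv : ∀ t : ℝ, ‖deriv (deriv γ) t‖ ≤ 1 / r₀) :
    ∀ s : ℝ, 0 ≤ s →
      s - s ^ 3 / (24 * r₀ ^ 2) ≤ ‖γ s - γ 0‖ ∧ ‖γ s - γ 0‖ ≤ s :=
  stmt_1_general γ hγ hunit r₀ hcurv
end

section
/- Let γ : ℝ → ℝ^D be a C³ curve parametrized by arc length, i.e. ‖γ'(t)‖ = 1 for all t, set x = γ(0), and let V ⊆ ℝ^D be a linear subspace with γ'(0) ∈ V and γ''(0) ∈ V^⊥. Let P denote the orthogonal projection of ℝ^D onto V. Then there exist constants C > 0 and ε > 0 such that for all s ∈ (0, ε), | ‖P(γ(s) − x)‖ − s | ≤ C s³. -/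
/-!
By Taylor's theorem, `γ s - γ 0 = s • γ'(0) + (s ^ 2 / 2) • γ''(0) + O(s ^ 3)`. The projection
onto `V` fixes the first term, kills the second and does not increase the norm of the remainder,
so by the reverse triangle inequality `‖P (γ s - γ 0)‖` differs from `‖s • γ'(0)‖ = s` by
`O(s ^ 3)`.
-/

open Set Topology Asymptotics

theorem taylor_isBigO_univ {E : Type*} [NormedAddCommGroup E] [NormedSpace ℝ E]
    {f : ℝ → E} {x₀ : ℝ} {n : ℕ} (hf : ContDiff ℝ (n + 1) f) :
    (fun x ↦ f x - taylorWithinEval f n univ x₀ x) =O[𝓝 x₀] fun x ↦ (x - x₀) ^ (n + 1) := by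
  have hnext : (fun x ↦ taylorWithinEval f (n + 1) univ x₀ x - taylorWithinEval f n univ x₀ x)
      =O[𝓝 x₀] fun x ↦ (x - x₀) ^ (n + 1) := by
    simp only [taylorWithinEval_succ, add_sub_cancel_left, mul_smul]
    exact (isBigO_of_le' (c := ‖_‖) _ fun x ↦
      ((norm_smul _ _).trans (mul_comm _ _)).le).const_smul_left _
  refine ((taylor_isLittleO_univ (mod_cast hf)).isBigO.add hnext).congr_left fun x ↦ ?_
  exact sub_add_sub_cancel _ _ _

theorem taylorWithinEval_univ_two {E : Type*} [NormedAddCommGroup E] [NormedSpace ℝ E]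
    (f : ℝ → E) (x₀ x : ℝ) :
    taylorWithinEval f 2 univ x₀ x
      = f x₀ + (x - x₀) • deriv f x₀ + ((x - x₀) ^ 2 / 2) • deriv (deriv f) x₀ := by
  simp only [taylorWithinEval_succ, taylor_within_zero_eval, iteratedDerivWithin_univ,
    iteratedDeriv_succ]
  norm_num [div_eq_inv_mul]

theorem Submodule.abs_norm_starProjection_sub_norm_le {E : Type*}
    [NormedAddCommGroup E] [InnerProductSpace ℝ E] (K : Submodule ℝ E) [K.HasOrthogonalProjection]
    {u v w : E} (hu : u ∈ K) (hv : v ∈ Kᗮ) :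
    |‖K.starProjection (u + v + w)‖ - ‖u‖| ≤ ‖w‖ := by
  have hproj : K.starProjection (u + v + w) = u + K.starProjection w := by
    rw [map_add, map_add, (K.starProjection_apply_eq_zero_iff).mpr hv,
      starProjection_eq_self_iff.mpr hu, add_zero]
  calc |‖K.starProjection (u + v + w)‖ - ‖u‖| ≤ ‖K.starProjection w‖ := by
        simpa [hproj] using abs_norm_sub_norm_le (u + K.starProjection w) u
    _ ≤ ‖w‖ := K.norm_starProjection_apply_le w

/-- Statement (i) in the proof of Theorem 4 of the paper: for a unit-speed `C³`
curve `γ` with `γ'(0)` in the subspace `V` and `γ''(0)` in `Vᗮ`, the norm of the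
orthogonal projection of `γ(s) − γ(0)` onto `V` estimates `s` with third-order
error. -/
theorem stmt_9 {D : ℕ} (γ : ℝ → EuclideanSpace ℝ (Fin D))
    (hγ : ContDiff ℝ 3 γ)
    (hunit : ∀ t : ℝ, ‖deriv γ t‖ = 1)
    (x : EuclideanSpace ℝ (Fin D)) (hx : x = γ 0)
    (V : Submodule ℝ (EuclideanSpace ℝ (Fin D)))
    (htan : deriv γ 0 ∈ V) (hnor : deriv (deriv γ) 0 ∈ Vᗮ) :
    ∃ C > (0 : ℝ), ∃ ε > (0 : ℝ), ∀ s ∈ Set.Ioo (0 : ℝ) ε,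
      |‖(V.orthogonalProjectionOnto (γ s - x) : EuclideanSpace ℝ (Fin D))‖ - s|
        ≤ C * s ^ 3 := by
  subst hx
  obtain ⟨C, hC, hremainder⟩ :=
    (taylor_isBigO_univ (n := 2) (x₀ := 0) (f := γ) (by exact_mod_cast hγ)).exists_pos
  obtain ⟨ε, hε, hbound⟩ := Metric.eventually_nhds_iff.mp hremainder.bound
  refine ⟨C, hC, ε, hε, fun s ⟨hs0, hsε⟩ ↦ ?_⟩
  have hsplit : γ s - γ 0 = s • deriv γ 0 + (s ^ 2 / 2) • deriv (deriv γ) 0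
      + (γ s - taylorWithinEval γ 2 univ 0 s) := by
    rw [taylorWithinEval_univ_two]
    simp only [sub_zero]
    abel
  have hprojection := V.abs_norm_starProjection_sub_norm_le (V.smul_mem s htan)
    (Vᗮ.smul_mem (s ^ 2 / 2) hnor) (w := γ s - taylorWithinEval γ 2 univ 0 s)
  rw [norm_smul, hunit 0, mul_one, Real.norm_of_nonneg hs0.le] at hprojection
  rw [Submodule.coe_orthogonalProjectionOnto_apply, hsplit]
  calc _ ≤ ‖γ s - taylorWithinEval γ 2 univ 0 s‖ := hprojection
    _ ≤ C * ‖(s - 0) ^ 3‖ := hbound (by rwa [Real.dist_eq, sub_zero, abs_of_pos hs0])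
    _ = C * s ^ 3 := by rw [sub_zero, Real.norm_of_nonneg (by positivity)]
end

section
/- Let γ : ℝ → ℝ^D be a smooth (C^∞) curve parametrized by arc length, i.e. ‖γ'(t)‖ = 1 for all t, set x = γ(0), let n be a unit vector with ⟨n, γ'(0)⟩ = 0, let r > 0, and set c = x + r n. Then there exist constants C > 0 and ε > 0 such that for all s with |s| < ε, | ⟨x − c, γ(s) − c⟩ / (r ‖γ(s) − c‖) − (1 − s²/(2r²)) | ≤ C s⁴. -/
open RealInnerProductSpace

open Asymptotics Filter

private lemma aux_isBigO_one {F : ℝ → ℝ} (h : ContinuousAt F 0) :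
    F =O[nhds 0] (fun s : ℝ => s ^ 0) := by
  simp only [pow_zero]
  rw [isBigO_one_iff]
  exact h.norm.isBoundedUnder_le

private lemma aux_step {F F' : ℝ → ℝ} {k : ℕ} (hd : ∀ t, HasDerivAt F (F' t) t)
    (h0 : F 0 = 0) (hO : F' =O[nhds 0] fun s => s ^ k) :
    F =O[nhds 0] (fun s => s ^ (k + 1)) := by
  rw [isBigO_iff] at hO ⊢
  obtain ⟨C, hC⟩ := hO
  rw [Metric.eventually_nhds_iff] at hC
  obtain ⟨δ, hδ, hb⟩ := hC
  refine ⟨max C 0, Metric.eventually_nhds_iff.mpr ⟨δ, hδ, ?_⟩⟩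
  intro s hs
  have habs : ∀ t ∈ Set.uIcc (0:ℝ) s, |t| ≤ |s| := by
    intro t ht
    rw [Set.uIcc_eq_union] at ht
    rcases ht with ht | ht <;> rw [Set.mem_Icc] at ht <;>
      rcases abs_cases s with ⟨h1, h2⟩ | ⟨h1, h2⟩ <;>
      rw [abs_le] <;> constructor <;> nlinarith
  have bound : ∀ t ∈ Set.uIcc (0:ℝ) s, ‖F' t‖ ≤ max C 0 * |s| ^ k := by
    intro t ht
    have htδ : dist t 0 < δ := by
      rw [Real.dist_eq, sub_zero]
      exact lt_of_le_of_lt (habs t ht) (by simpa [Real.dist_eq] using hs)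
    calc ‖F' t‖ ≤ C * ‖t ^ k‖ := hb htδ
      _ ≤ max C 0 * |s| ^ k := by
          rw [Real.norm_eq_abs, abs_pow]
          exact mul_le_mul (le_max_left _ _)
            (pow_le_pow_left₀ (abs_nonneg _) (habs t ht) k)
            (by positivity) (le_max_right _ _)
  have key := (convex_uIcc (0:ℝ) s).norm_image_sub_le_of_norm_hasDerivWithin_le
    (fun t _ => (hd t).hasDerivWithinAt) bound Set.left_mem_uIcc Set.right_mem_uIcc
  rw [h0, sub_zero, sub_zero] at key
  calc ‖F s‖ ≤ max C 0 * |s| ^ k * ‖s‖ := key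
    _ = max C 0 * ‖s ^ (k + 1)‖ := by
        rw [Real.norm_eq_abs, Real.norm_eq_abs, abs_pow]; ring

private lemma aux_pow_le {j k : ℕ} (h : j ≤ k) :
    (fun s : ℝ => s ^ k) =O[nhds 0] fun s => s ^ j := by
  rw [isBigO_iff]
  refine ⟨1, Metric.eventually_nhds_iff.mpr ⟨1, one_pos, fun {s} hs => ?_⟩⟩
  rw [Real.dist_eq, sub_zero] at hs
  rw [Real.norm_eq_abs, Real.norm_eq_abs, abs_pow, abs_pow, one_mul]
  exact pow_le_pow_of_le_one (abs_nonneg s) hs.le h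

set_option maxHeartbeats 2000000 in
/-- The key cosine expansion from the proofs of Theorems 2–4 of the paper:
`cos θ(s) = ⟨x − c, γ(s) − c⟩/(r‖γ(s) − c‖) = 1 − s²/(2r²) + O(s⁴)`, where `γ` is
a smooth unit-speed curve, `x = γ(0)`, and `c = x + r n` with `n` a unit vector
orthogonal to `γ'(0)`. -/
theorem stmt_13 {D : ℕ} (γ : ℝ → EuclideanSpace ℝ (Fin D))
    (hγ : ContDiff ℝ (⊤ : ℕ∞) γ)
    (hunit : ∀ t : ℝ, ‖deriv γ t‖ = 1)
    (x : EuclideanSpace ℝ (Fin D)) (hx : x = γ 0)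
    (n : EuclideanSpace ℝ (Fin D)) (hn : ‖n‖ = 1)
    (hperp : ⟪n, deriv γ 0⟫ = 0)
    (r : ℝ) (hr : 0 < r)
    (c : EuclideanSpace ℝ (Fin D)) (hc : c = x + r • n) :
    ∃ C > (0 : ℝ), ∃ ε > (0 : ℝ), ∀ s : ℝ, |s| < ε →
      |⟪x - c, γ s - c⟫ / (r * ‖γ s - c‖) - (1 - s ^ 2 / (2 * r ^ 2))|
        ≤ C * s ^ 4 := by
  have hr' : r ≠ 0 := ne_of_gt hr
  set γ1 := deriv γ with hγ1def
  set γ2 := deriv γ1 with hγ2def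
  set γ3 := deriv γ2 with hγ3def
  set γ4 := deriv γ3 with hγ4def
  have hγ' : ContDiff ℝ (⊤ : ℕ∞) γ := hγ.of_le (by simp)
  obtain ⟨hdγ, hsγ1⟩ := contDiff_infty_iff_deriv.mp hγ'
  obtain ⟨hdγ1, hsγ2⟩ := contDiff_infty_iff_deriv.mp hsγ1
  obtain ⟨hdγ2, hsγ3⟩ := contDiff_infty_iff_deriv.mp hsγ2
  obtain ⟨hdγ3, hsγ4⟩ := contDiff_infty_iff_deriv.mp hsγ3
  have Hγ : ∀ t, HasDerivAt γ (γ1 t) t := fun t => (hdγ t).hasDerivAt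
  have Hγ1 : ∀ t, HasDerivAt γ1 (γ2 t) t := fun t => (hdγ1 t).hasDerivAt
  have Hγ2 : ∀ t, HasDerivAt γ2 (γ3 t) t := fun t => (hdγ2 t).hasDerivAt
  have Hγ3 : ∀ t, HasDerivAt γ3 (γ4 t) t := fun t => (hdγ3 t).hasDerivAt
  have hunit' : ∀ t, ⟪γ1 t, γ1 t⟫ = 1 := fun t => by
    rw [real_inner_self_eq_norm_sq, hunit t, one_pow]
  have horth : ∀ t, ⟪γ2 t, γ1 t⟫ = 0 := by
    intro t
    have h1 : HasDerivAt (fun t => ⟪γ1 t, γ1 t⟫) (⟪γ1 t, γ2 t⟫ + ⟪γ2 t, γ1 t⟫) t :=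
      (Hγ1 t).inner ℝ (Hγ1 t)
    have h2 : (fun t => ⟪γ1 t, γ1 t⟫) = fun _ => (1:ℝ) := funext hunit'
    rw [h2] at h1
    have h3 := h1.unique (hasDerivAt_const t 1)
    rw [real_inner_comm (γ1 t) (γ2 t)] at h3
    rw [real_inner_comm]
    linarith [h3]
  -- u chain
  have Hu : ∀ t, HasDerivAt (fun s => ⟪n, γ s - x⟫) (⟪n, γ1 t⟫) t := by
    intro t
    have h := (hasDerivAt_const t n).inner ℝ ((Hγ t).sub_const x)
    simpa using h
  have Hu1 : ∀ t, HasDerivAt (fun s => ⟪n, γ1 s⟫) (⟪n, γ2 t⟫) t := by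
    intro t
    have h := (hasDerivAt_const t n).inner ℝ (Hγ1 t)
    simpa using h
  have hu2O : (fun s : ℝ => ⟪n, γ2 s⟫) =O[nhds 0] (fun s => s ^ 0) :=
    aux_isBigO_one (Continuous.continuousAt (continuous_const.inner hsγ2.continuous))
  have hu1O : (fun s : ℝ => ⟪n, γ1 s⟫) =O[nhds 0] (fun s => s ^ 1) :=
    aux_step Hu1 (by simpa using hperp) hu2O
  have huO : (fun s : ℝ => ⟪n, γ s - x⟫) =O[nhds 0] (fun s => s ^ 2) :=
    aux_step Hu (by simp [hx]) hu1O
  -- F chain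
  have HG3 : ∀ t, HasDerivAt (fun s => 2 * ⟪γ3 s, γ s - x⟫)
      (2 * (⟪γ3 t, γ1 t⟫ + ⟪γ4 t, γ t - x⟫)) t := fun t =>
    ((Hγ3 t).inner ℝ ((Hγ t).sub_const x)).const_mul 2
  have hG4O : (fun t : ℝ => 2 * (⟪γ3 t, γ1 t⟫ + ⟪γ4 t, γ t - x⟫)) =O[nhds 0]
      (fun s => s ^ 0) := by
    refine aux_isBigO_one (Continuous.continuousAt ?_)
    exact (continuous_const.mul ((hsγ3.continuous.inner hsγ1.continuous).add
      (hsγ4.continuous.inner (hγ'.continuous.sub continuous_const))))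
  have hG3O : (fun s : ℝ => 2 * ⟪γ3 s, γ s - x⟫) =O[nhds 0] (fun s => s ^ 1) :=
    aux_step HG3 (by simp [hx]) hG4O
  have HG2 : ∀ t, HasDerivAt (fun s => 2 * ⟪γ2 s, γ s - x⟫)
      (2 * ⟪γ3 t, γ t - x⟫) t := by
    intro t
    have h := ((Hγ2 t).inner ℝ ((Hγ t).sub_const x)).const_mul 2
    refine h.congr_deriv ?_
    rw [horth t]
    ring
  have hG2O : (fun s : ℝ => 2 * ⟪γ2 s, γ s - x⟫) =O[nhds 0] (fun s => s ^ 2) :=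
    aux_step HG2 (by simp [hx]) hG3O
  have HG1 : ∀ t, HasDerivAt (fun s => 2 * ⟪γ1 s, γ s - x⟫ - 2 * s)
      (2 * ⟪γ2 t, γ t - x⟫) t := by
    intro t
    have h := (((Hγ1 t).inner ℝ ((Hγ t).sub_const x)).const_mul 2).sub
      ((hasDerivAt_id t).const_mul 2)
    refine h.congr_deriv ?_
    rw [hunit' t]
    ring
  have hG1O : (fun s : ℝ => 2 * ⟪γ1 s, γ s - x⟫ - 2 * s) =O[nhds 0]
      (fun s => s ^ 3) := aux_step HG1 (by simp [hx]) hG2O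
  have HF : ∀ t, HasDerivAt (fun s => ⟪γ s - x, γ s - x⟫ - s ^ 2)
      (2 * ⟪γ1 t, γ t - x⟫ - 2 * t) t := by
    intro t
    have h := (((Hγ t).sub_const x).inner ℝ ((Hγ t).sub_const x)).sub
      (hasDerivAt_pow 2 t)
    refine h.congr_deriv ?_
    rw [real_inner_comm (γ1 t) (γ t - x)]
    push_cast
    ring
  have hFO : (fun s : ℝ => ⟪γ s - x, γ s - x⟫ - s ^ 2) =O[nhds 0]
      (fun s => s ^ 4) := aux_step HF (by simp [hx]) hG1O
  -- w = v - 2ru is O(s^2)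
  have hwO : (fun s : ℝ => ⟪γ s - x, γ s - x⟫ - 2*r*⟪n, γ s - x⟫) =O[nhds 0]
      (fun s => s ^ 2) := by
    have h1 : (fun s : ℝ => ⟪γ s - x, γ s - x⟫ - s ^ 2) =O[nhds 0] (fun s => s ^ 2) :=
      hFO.trans (aux_pow_le (by norm_num))
    have h2 : (fun s : ℝ => s ^ 2) =O[nhds 0] (fun s : ℝ => s ^ 2) := isBigO_refl _ _
    have h3 : (fun s : ℝ => 2*r*⟪n, γ s - x⟫) =O[nhds 0] (fun s => s ^ 2) :=
      huO.const_mul_left (2*r)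
    exact ((h1.add h2).sub h3).congr (fun s => by ring) (fun s => rfl)
  -- E is O(s^4)
  have hEO : (fun s : ℝ => ((⟪n, γ s - x⟫ * ⟪n, γ s - x⟫
        - (⟪γ s - x, γ s - x⟫ - s ^ 2))
        + (s ^ 2 / r ^ 2) * (⟪γ s - x, γ s - x⟫ - 2*r*⟪n, γ s - x⟫))
        - (s ^ 4 / (4 * r ^ 4)) * (r ^ 2 + (⟪γ s - x, γ s - x⟫ - 2*r*⟪n, γ s - x⟫)))
      =O[nhds 0] (fun s => s ^ 4) := by
    have t1 : (fun s : ℝ => ⟪n, γ s - x⟫ * ⟪n, γ s - x⟫) =O[nhds 0] (fun s => s ^ 4) :=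
      (huO.mul huO).congr (fun _ => rfl) (fun s => by ring)
    have t3 : (fun s : ℝ => (s ^ 2 / r ^ 2) * (⟪γ s - x, γ s - x⟫ - 2*r*⟪n, γ s - x⟫))
        =O[nhds 0] (fun s => s ^ 4) := by
      have h := ((isBigO_refl (fun s : ℝ => s ^ 2) (nhds 0)).mul hwO).const_mul_left (1/r^2)
      exact h.congr (fun s => by ring) (fun s => by ring)
    have hb : (fun s : ℝ => r ^ 2 + (⟪γ s - x, γ s - x⟫ - 2*r*⟪n, γ s - x⟫))
        =O[nhds 0] (fun s : ℝ => s ^ 0) := by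
      refine aux_isBigO_one (Continuous.continuousAt ?_)
      have hc1 : Continuous fun s : ℝ => γ s - x := hγ'.continuous.sub continuous_const
      exact continuous_const.add ((hc1.inner hc1).sub
        (continuous_const.mul (continuous_const.inner hc1)))
    have t4 : (fun s : ℝ => (s ^ 4 / (4 * r ^ 4))
        * (r ^ 2 + (⟪γ s - x, γ s - x⟫ - 2*r*⟪n, γ s - x⟫))) =O[nhds 0]
        (fun s => s ^ 4) := by
      have h := ((isBigO_refl (fun s : ℝ => s ^ 4) (nhds 0)).mul hb).const_mul_left (1/(4*r^4))
      exact h.congr (fun s => by ring) (fun s => by ring)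
    exact (t1.sub hFO).add t3 |>.sub t4
  -- quantitative form
  rw [isBigO_iff] at hEO
  obtain ⟨C₁, hC₁⟩ := hEO
  -- geometry
  have hnn : ⟪n, n⟫ = (1:ℝ) := by rw [real_inner_self_eq_norm_sq, hn, one_pow]
  have hsub : ∀ s : ℝ, γ s - c = (γ s - x) - r • n := by intro s; rw [hc]; abel
  have hg0 : ‖γ (0:ℝ) - c‖ = r := by
    have : γ (0:ℝ) - c = -(r • n) := by rw [hc, hx]; abel
    rw [this, norm_neg, norm_smul, hn, mul_one, Real.norm_eq_abs, abs_of_pos hr]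
  have hu0 : ⟪n, γ (0:ℝ) - x⟫ = (0:ℝ) := by simp [hx]
  have hgsq : ∀ s : ℝ, ‖γ s - c‖ ^ 2
      = (⟪γ s - x, γ s - x⟫ - 2*r*⟪n, γ s - x⟫) + r ^ 2 := by
    intro s
    rw [hsub s, norm_sub_sq_real, ← real_inner_self_eq_norm_sq, real_inner_smul_right,
      real_inner_comm (γ s - x) n, norm_smul, hn, mul_one, Real.norm_eq_abs, sq_abs]
    ring
  have hnum : ∀ s : ℝ, ⟪x - c, γ s - c⟫ = r * (r - ⟪n, γ s - x⟫) := by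
    intro s
    have hxc : x - c = -(r • n) := by rw [hc]; abel
    rw [hxc, hsub s]
    simp only [inner_neg_left, inner_sub_left, inner_sub_right, real_inner_smul_left,
      real_inner_smul_right, hnn]
    ring
  -- continuity / eventual lower bounds
  have hgcont : Continuous fun s : ℝ => ‖γ s - c‖ := (hγ'.continuous.sub continuous_const).norm
  have hucont : Continuous fun s : ℝ => ⟪n, γ s - x⟫ :=
    continuous_const.inner (hγ'.continuous.sub continuous_const)
  have ev1 : ∀ᶠ s : ℝ in nhds 0, 0 < ‖γ s - c‖ := by
    refine hgcont.continuousAt.eventually (eventually_gt_nhds ?_)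
    show (0:ℝ) < ‖γ (0:ℝ) - c‖
    rw [hg0]; exact hr
  have ev2 : ∀ᶠ s : ℝ in nhds 0, r ^ 2 < ‖γ s - c‖
      * ((r - ⟪n, γ s - x⟫) + (1 - s ^ 2 / (2 * r ^ 2)) * ‖γ s - c‖) := by
    have hcont : Continuous fun s : ℝ => ‖γ s - c‖
        * ((r - ⟪n, γ s - x⟫) + (1 - s ^ 2 / (2 * r ^ 2)) * ‖γ s - c‖) :=
      hgcont.mul ((continuous_const.sub hucont).add
        ((continuous_const.sub ((continuous_pow 2).div_const (2*r^2))).mul hgcont))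
    refine hcont.continuousAt.eventually (eventually_gt_nhds ?_)
    show r ^ 2 < ‖γ (0:ℝ) - c‖
      * ((r - ⟪n, γ (0:ℝ) - x⟫) + (1 - (0:ℝ) ^ 2 / (2 * r ^ 2)) * ‖γ (0:ℝ) - c‖)
    rw [hg0, hu0]
    have : (0:ℝ) ^ 2 / (2 * r ^ 2) = 0 := by simp
    rw [this]
    nlinarith
  obtain ⟨ε, hε, hall⟩ := Metric.eventually_nhds_iff.mp ((hC₁.and (ev1.and ev2)))
  refine ⟨|C₁| / r ^ 2 + 1, by positivity, ε, hε, ?_⟩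
  intro s hs
  obtain ⟨h1, h2, h3⟩ := hall (show dist s 0 < ε by rwa [Real.dist_eq, sub_zero])
  set g := ‖γ s - c‖ with hgdef
  set u := ⟪n, γ s - x⟫ with hudef
  set v := ⟪γ s - x, γ s - x⟫ with hvdef
  set T := 1 - s ^ 2 / (2 * r ^ 2) with hTdef
  set E := ((u * u - (v - s ^ 2)) + (s ^ 2 / r ^ 2) * (v - 2*r*u))
      - (s ^ 4 / (4 * r ^ 4)) * (r ^ 2 + (v - 2*r*u)) with hEdef
  have hgsq' : g ^ 2 = (v - 2*r*u) + r ^ 2 := by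
    rw [hgdef, hudef, hvdef]; exact hgsq s
  have hnum' : ⟪x - c, γ s - c⟫ = r * (r - u) := by
    rw [hudef]; exact hnum s
  clear_value E
  clear_value T
  clear_value v
  clear_value u
  clear_value g
  clear hall hC₁ hγ hγ' hdγ hsγ1 hdγ1 hsγ2 hdγ2 hsγ3 hdγ3 hsγ4 Hγ Hγ1 Hγ2 Hγ3
    hunit' horth Hu Hu1 hu2O hu1O huO HG3 hG4O hG3O HG2 hG2O HG1 hG1O HF hFO hwO
    hgsq hnum hgcont hucont ev1 ev2 hunit hperp hnn hsub hg0 hu0 hs hε hgdef hudef hvdef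
  clear_value γ4
  clear_value γ3
  clear_value γ2
  clear_value γ1
  clear γ4 γ3 γ2 γ1 hγ1def hγ2def hγ3def hγ4def
  have hEb : |E| ≤ |C₁| * s ^ 4 := by
    have h4 : |s ^ 4| = s ^ 4 := abs_of_nonneg (by positivity)
    calc |E| = ‖E‖ := (Real.norm_eq_abs E).symm
      _ ≤ C₁ * ‖s ^ 4‖ := h1
      _ ≤ |C₁| * s ^ 4 := by
          rw [Real.norm_eq_abs, h4]
          exact mul_le_mul_of_nonneg_right (le_abs_self C₁) (by positivity)
  have hg0' : g ≠ 0 := ne_of_gt h2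
  have hPT : 0 < (r - u) + T * g := by nlinarith [h2, h3, sq_nonneg r]
  have hid : (r - u) ^ 2 - T ^ 2 * g ^ 2 = E := by
    rw [hgsq', hTdef, hEdef]
    field_simp
    ring
  have hfact : ((r - u) - T * g) * ((r - u) + T * g) = E := by rw [← hid]; ring
  have hdiff : ⟪x - c, γ s - c⟫ / (r * g) - T = E / (g * ((r - u) + T * g)) := by
    rw [hnum', ← hfact, mul_div_mul_right (r - u - T * g) g hPT.ne']
    field_simp
  rw [hdiff, abs_div, abs_of_pos (by positivity : (0:ℝ) < g * ((r - u) + T * g))]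
  calc |E| / (g * ((r - u) + T * g)) ≤ (|C₁| * s ^ 4) / r ^ 2 := by
        apply div_le_div₀ (by positivity) hEb (by positivity) h3.le
    _ ≤ (|C₁| / r ^ 2 + 1) * s ^ 4 := by
        have h4 : (0:ℝ) ≤ s ^ 4 := by positivity
        have hr2 : (0:ℝ) < r ^ 2 := by positivity
        rw [div_add' _ _ _ (ne_of_gt hr2), div_mul_eq_mul_div]
        gcongr
        nlinarith [mul_nonneg hr2.le h4]
end
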